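/- Lemma (marking equivalence): Let f be a BN of dimension n, x̂ ∈ {0,1,↗,↘}^n, t ∈ T_i a transition of the encoding N(f), and m ∈ μ(x̂) a compatible marking with enab(t,m) > 0. Then for any other compatible marking m' ∈ μ(x̂), enab(t,m') > 0; moreover enab(t, ⟨x̂⟩) ≥ 0.5 for the canonical marking ⟨x̂⟩. -/

import Mathlib

open Relation Filter

/-! ### Boolean networks and their semantics -/

abbrev Config (n : ℕ) := Fin n → Bool
abbrev BN (n : ℕ) := Config n → Fin n → Bool

def Delta {n : ℕ} (x y : Config n) : Set (Fin n) := {i | x i ≠ y i}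

def fa {n : ℕ} (f : BN n) (x y : Config n) : Prop :=
  ∃ i, Delta x y = {i} ∧ f x i = y i

def syn {n : ℕ} (f : BN n) (x y : Config n) : Prop := ∀ i, f x i = y i

def ga {n : ℕ} (f : BN n) (x y : Config n) : Prop := ∀ i ∈ Delta x y, f x i = y i

/-! ### Most permissive semantics -/

inductive MPV where
  | b : Bool → MPV
  | up : MPV
  | down : MPV
deriving DecidableEq

abbrev MPConfig (n : ℕ) := Fin n → MPV

def toMP {n : ℕ} (x : Config n) : MPConfig n := fun i => .b (x i)

def beta {n : ℕ} (xh : MPConfig n) : Set (Config n) :=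
  {x | ∀ i v, xh i = .b v → x i = v}

def mpStep {n : ℕ} (f : BN n) (xh yh : MPConfig n) : Prop :=
  ∃ i, (∀ j, j ≠ i → xh j = yh j) ∧ xh i ≠ yh i ∧
    ((xh i = .up ∧ yh i = .b true) ∨
     (xh i = .down ∧ yh i = .b false) ∨
     (xh i ≠ .b true ∧ yh i = .up ∧ ∃ x ∈ beta xh, f x i = true) ∨
     (xh i ≠ .b false ∧ yh i = .down ∧ ∃ x ∈ beta xh, f x i = false))

def mp {n : ℕ} (f : BN n) (x y : Config n) : Prop :=
  ReflTransGen (mpStep f) (toMP x) (toMP y)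

/-! ### Petri nets (discrete and continuous) -/

structure Net (P T : Type) where
  wPT : P → T → ℕ
  wTP : T → P → ℕ

def dfire {P T : Type} (N : Net P T) (t : T) (M M' : P → ℕ) : Prop :=
  (∀ p, N.wPT p t ≤ M p) ∧ ∀ p, M' p = M p - N.wPT p t + N.wTP t p

def dReach {P T : Type} (N : Net P T) : (P → ℕ) → (P → ℕ) → Prop :=
  ReflTransGen (fun M M' => ∃ t, dfire N t M M')

def cfire {P T : Type} (N : Net P T) (t : T) (α : ℝ) (m m' : P → ℝ) : Prop :=
  0 ≤ α ∧ (∀ p, α * N.wPT p t ≤ m p) ∧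
    ∀ p, m' p = m p - α * N.wPT p t + α * N.wTP t p

def cReach {P T : Type} (N : Net P T) : (P → ℝ) → (P → ℝ) → Prop :=
  ReflTransGen (fun m m' => ∃ t α, cfire N t α m m')

def limReach {P T : Type} (N : Net P T) (m m' : P → ℝ) : Prop :=
  ∃ ms : ℕ → P → ℝ, ms 0 = m ∧
    (∀ k, ∃ t α, cfire N t α (ms k) (ms (k+1))) ∧
    Tendsto ms atTop (nhds m')

def IsTrap {P T : Type} (N : Net P T) (S : Set P) : Prop :=
  ∀ t, (∃ p ∈ S, 0 < N.wPT p t) → ∃ p ∈ S, 0 < N.wTP t p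

def enabPos {P T : Type} (N : Net P T) (t : T) (m : P → ℝ) : Prop :=
  ∀ p, 0 < N.wPT p t → 0 < m p

def enabGe {P T : Type} (N : Net P T) (t : T) (m : P → ℝ) (c : ℝ) : Prop :=
  ∀ p, 0 < N.wPT p t → c * N.wPT p t ≤ m p

/-! ### Petri net encoding of Boolean networks -/

abbrev Clause (n : ℕ) := Fin n → Option Bool

def satC {n : ℕ} (z : Config n) (C : Clause n) : Prop :=
  ∀ j v, C j = some v → z j = v

structure ETrans (n : ℕ) where
  i : Fin n
  s : Bool
  C : Clause n

abbrev EPlace (n : ℕ) := Fin n × Bool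

def encNet (n : ℕ) : Net (EPlace n) (ETrans n) where
  wPT := fun p t =>
    if p.1 = t.i then (if p.2 = !t.s then 1 else 0)
    else (if t.C p.1 = some p.2 then 1 else 0)
  wTP := fun t p =>
    if p.1 = t.i then (if p.2 = t.s then 1 else 0)
    else (if t.C p.1 = some p.2 then 1 else 0)

def mu {n : ℕ} (xh : MPConfig n) : Set (EPlace n → ℝ) :=
  {m | (∀ p, 0 ≤ m p) ∧ ∀ i,
    m (i, false) + m (i, true) = 1 ∧
    (∀ v, xh i = .b v → m (i, v) = 1) ∧
    ((xh i = .up ∨ xh i = .down) →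
      0 < m (i, false) ∧ m (i, false) < 1 ∧ 0 < m (i, true) ∧ m (i, true) < 1)}

noncomputable def canon {n : ℕ} (xh : MPConfig n) : EPlace n → ℝ := fun p =>
  match xh p.1 with
  | .b v => if p.2 = v then 1 else 0
  | _ => 1/2

def validT {n : ℕ} (D : Fin n → Bool → Set (Clause n)) (t : ETrans n) : Prop :=
  t.C ∈ D t.i t.s

def IsDNF {n : ℕ} (f : BN n) (D : Fin n → Bool → Set (Clause n)) : Prop :=
  (∀ i s z, (∃ C ∈ D i s, satC z C) ↔ (z i = !s ∧ f z i = s)) ∧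
  (∀ i s C, C ∈ D i s → C i = some (!s))

def cReachG {P T : Type} (N : Net P T) (good : T → Prop) :
    (P → ℝ) → (P → ℝ) → Prop :=
  ReflTransGen (fun m m' => ∃ t, good t ∧ ∃ α, cfire N t α m m')

def climReachG {P T : Type} (N : Net P T) (good : T → Prop) (m m' : P → ℝ) : Prop :=
  ∃ ms : ℕ → P → ℝ, ms 0 = m ∧
    (∀ k, ∃ t, good t ∧ ∃ α, cfire N t α (ms k) (ms (k+1))) ∧
    Tendsto ms atTop (nhds m')

/-! A marking compatible with `xh` is positive exactly on the places that no Boolean coordinate of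
`xh` contradicts, so whether a transition is enabled does not depend on the compatible marking
chosen. The canonical marking is compatible and takes only the values `0`, `1/2` and `1`, while
every arc weight of the encoding is `0` or `1`. -/

theorem enabGe_of_enabPos {P T : Type} {N : Net P T} {t : T} {m : P → ℝ} {c : ℝ}
    (hw : ∀ p, N.wPT p t ≤ 1) (hc : ∀ p, 0 < m p → c ≤ m p) (he : enabPos N t m) :
    enabGe N t m c := by
  intro p hp
  have hp1 : N.wPT p t = 1 := le_antisymm (hw p) hp
  simpa [hp1] using hc p (he p hp)

theorem encNet_wPT_le_one {n : ℕ} (p : EPlace n) (t : ETrans n) : (encNet n).wPT p t ≤ 1 := by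
  simp only [encNet]
  split_ifs <;> omega

section mu

variable {n : ℕ} {xh : MPConfig n} {m : EPlace n → ℝ}

theorem mu_apply_of_eq_b (hm : m ∈ mu xh) {i : Fin n} {v : Bool} (hv : xh i = .b v) (w : Bool) :
    m (i, w) = if w = v then 1 else 0 := by
  obtain ⟨hsum, hb, -⟩ := hm.2 i
  have hmv := hb v hv
  cases v <;> cases w <;> simp_all

theorem mu_pos_iff (hm : m ∈ mu xh) (i : Fin n) (w : Bool) :
    0 < m (i, w) ↔ ∀ v, xh i = .b v → w = v := by
  cases hx : xh i with
  | b v =>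
    rw [mu_apply_of_eq_b hm hx]
    split_ifs <;> simp_all
  | up =>
    have := (hm.2 i).2.2 (.inl hx)
    cases w <;> simp [this]
  | down =>
    have := (hm.2 i).2.2 (.inr hx)
    cases w <;> simp [this]

theorem enabPos_of_mem_mu {T : Type} {N : Net (EPlace n) T} {t : T} {m' : EPlace n → ℝ}
    (hm : m ∈ mu xh) (hm' : m' ∈ mu xh) (he : enabPos N t m) : enabPos N t m' := fun p hp =>
  (mu_pos_iff hm' p.1 p.2).2 ((mu_pos_iff hm p.1 p.2).1 (he p hp))

end mu

theorem canon_mem_mu {n : ℕ} (xh : MPConfig n) : canon xh ∈ mu xh := by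
  refine ⟨fun p => ?_, fun i => ?_⟩
  · simp only [canon]
    split <;> norm_num
    split_ifs <;> norm_num
  · cases hx : xh i with
    | b v => cases v <;> simp [canon, hx]
    | up | down => simp [canon, hx]; norm_num

theorem half_le_canon_of_pos {n : ℕ} {xh : MPConfig n} {p : EPlace n} (hp : 0 < canon xh p) :
    1 / 2 ≤ canon xh p := by
  revert hp
  simp only [canon]
  split
  · split_ifs <;> norm_num
  · norm_num

/-- marking equivalence: if a transition of the encoding is
enabled at some marking compatible with an MP configuration x̂, then it is
enabled at every compatible marking, and its enabling degree at the
canonical marking ⟨x̂⟩ is at least 0.5. -/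
theorem marking_equivalence {n : ℕ} (xh : MPConfig n) (t : ETrans n)
    (m : EPlace n → ℝ) (hm : m ∈ mu xh) (he : enabPos (encNet n) t m) :
    (∀ m' ∈ mu xh, enabPos (encNet n) t m') ∧
      enabGe (encNet n) t (canon xh) (1/2) :=
  ⟨fun _ hm' => enabPos_of_mem_mu hm hm' he,
    enabGe_of_enabPos (encNet_wPT_le_one · t) (fun _ => half_le_canon_of_pos)
      (enabPos_of_mem_mu hm (canon_mem_mu xh) he)⟩
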